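/- arXiv:1104.4894 — 2 statements merged into one kernel-verified Lean document; each statement's English description precedes it below -/
import Mathlib

section
/- Let g₀ : ℝ → ℂ be bounded with exponential decay (so that its Zak transform converges absolutely), let c, d ∈ ℓ¹(ℤ), and define g = Σ_{k,l∈ℤ} c_k d_l e^{2πil·} g₀(·−k). Then the Zak transform of g satisfies Zg(x,ξ) = ĉ(−ξ) d̂(x) Zg₀(x,ξ) for all x, ξ ∈ ℝ, where ĉ(ξ) = Σ_k c_k e^{2πikξ} and d̂(x) = Σ_l d_l e^{2πilx}. -/
/-!
Write `e(t) = exp(2πit)`. Since `e(l(x - n)) = e(lx)` for integers `l, n` and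
`e(nξ) = e(-kξ) e((n + k)ξ)`, the `n`-th term of `Zg(x, ξ)` is `∑_{k,l} A_k B_l G_{n+k}` with
`A_k = c_k e(-kξ)`, `B_l = d_l e(lx)` and `G_m = g₀(x - m) e(mξ)`. All three families are absolutely
summable (`G` by the exponential decay of `g₀`), so the triple sum may be rearranged, and the
substitution `m = n + k` factors it as `(∑ A)(∑ B)(∑ G)`.
-/

open Complex Real

noncomputable section

/-- The Zak transform `Zg(x,ξ) = ∑_{k∈ℤ} g(x - k) e^{2πikξ}`. -/
def zakTransform (g : ℝ → ℂ) (x ξ : ℝ) : ℂ :=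
  ∑' k : ℤ, g (x - k) * Complex.exp (2 * π * I * (k * ξ))

end

theorem tsum_tsum_mul_add_eq_tsum_mul_tsum {R α ι : Type*} [NormedRing R] [CompleteSpace R]
    [AddGroup ι] {F : α → R} {G : ι → R} (hF : Summable fun p => ‖F p‖)
    (hG : Summable fun m => ‖G m‖) (s : α → ι) :
    ∑' n, ∑' p, F p * G (n + s p) = (∑' p, F p) * ∑' m, G m := by
  let e : ι × α ≃ α × ι :=
    (Equiv.prodComm ι α).trans (Equiv.prodShear (Equiv.refl α) fun p => Equiv.addRight (s p))
  have hK : Summable fun q : ι × α => F q.2 * G (q.1 + s q.2) :=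
    (e.summable_iff.mpr (summable_mul_of_summable_norm hF hG) :)
  rw [tsum_mul_tsum_of_summable_norm hF hG, ← e.tsum_eq]
  exact (hK.tsum_prod' hK.prod_factor).symm

lemma summable_exp_neg_mul_abs_int {a : ℝ} (ha : 0 < a) :
    Summable fun n : ℤ => rexp (-a * |(n : ℝ)|) := by
  have h := Real.summable_exp_nat_mul_iff.mpr (neg_neg_of_pos ha)
  refine .of_nat_of_neg (h.congr fun n => ?_) (h.congr fun n => ?_) <;> simp [mul_comm]

lemma summable_exp_neg_mul_abs_sub_int {a : ℝ} (ha : 0 < a) (x : ℝ) :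
    Summable fun n : ℤ => rexp (-a * |x - n|) := by
  refine ((summable_exp_neg_mul_abs_int ha).mul_left (rexp (a * |x|))).of_nonneg_of_le
    (fun _ => (exp_pos _).le) fun n => ?_
  rw [← Real.exp_add, exp_le_exp]
  nlinarith [abs_sub_abs_le_abs_sub (n : ℝ) x, abs_sub_comm (n : ℝ) x]

lemma norm_exp_two_pi_I_int_mul_ofReal (k : ℤ) (t : ℝ) :
    ‖cexp (2 * π * I * (k * t))‖ = 1 := by
  rw [show 2 * π * I * (k * t) = ((2 * π * k * t : ℝ) : ℂ) * I by push_cast; ring]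
  exact norm_exp_ofReal_mul_I _

lemma exp_two_pi_I_int_mul_sub_int (l n : ℤ) (x : ℝ) :
    cexp (2 * π * I * (l * (x - n))) = cexp (2 * π * I * (l * x)) := by
  rw [show 2 * π * I * (l * (x - n)) = 2 * π * I * (l * x) + ((-(l * n) : ℤ) : ℂ) * (2 * π * I) by
    push_cast; ring, Complex.exp_add, exp_int_mul_two_pi_mul_I, mul_one]

lemma summable_norm_mul_exp_two_pi_I {c : ℤ → ℂ} (hc : Summable fun k => ‖c k‖) (t : ℝ) :
    Summable fun k : ℤ => ‖c k * cexp (2 * π * I * (k * t))‖ := by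
  simpa only [norm_mul, norm_exp_two_pi_I_int_mul_ofReal, mul_one] using hc

lemma summable_norm_zak_summand {g₀ : ℝ → ℂ} {C a : ℝ} (ha : 0 < a)
    (hg₀ : ∀ t, ‖g₀ t‖ ≤ C * rexp (-a * |t|)) (x ξ : ℝ) :
    Summable fun n : ℤ => ‖g₀ (x - n) * cexp (2 * π * I * (n * ξ))‖ :=
  ((summable_exp_neg_mul_abs_sub_int ha x).mul_left C).of_nonneg_of_le (fun _ => norm_nonneg _)
    fun n => by rw [norm_mul, norm_exp_two_pi_I_int_mul_ofReal, mul_one]; exact hg₀ _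

/-- **Zak transform of a `C_{g₀}`-class window.** Let `g₀` be bounded with exponential
decay, `c, d ∈ ℓ¹(ℤ)`, and `g = ∑_{k,l} c_k d_l M_l T_k g₀`. Then
`Zg(x,ξ) = ĉ(-ξ) d̂(x) Zg₀(x,ξ)` for all `x, ξ ∈ ℝ`. -/
theorem zakTransform_of_C_class
    (g₀ : ℝ → ℂ)
    (hdecay : ∃ C a : ℝ, 0 < a ∧ ∀ t : ℝ, ‖g₀ t‖ ≤ C * Real.exp (-a * |t|))
    (c d : ℤ → ℂ) (hc : Summable fun k : ℤ => ‖c k‖) (hd : Summable fun l : ℤ => ‖d l‖)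
    (g : ℝ → ℂ)
    (hgdef : ∀ t : ℝ, g t = ∑' kl : ℤ × ℤ,
      c kl.1 * d kl.2 * Complex.exp (2 * π * I * (kl.2 * t)) * g₀ (t - kl.1)) :
    ∀ x ξ : ℝ, zakTransform g x ξ =
      (∑' k : ℤ, c k * Complex.exp (2 * π * I * (k * (-ξ)))) *
      (∑' l : ℤ, d l * Complex.exp (2 * π * I * (l * x))) *
      zakTransform g₀ x ξ := by
  intro x ξ
  obtain ⟨C, a, ha, hg₀⟩ := hdecay
  have hA := summable_norm_mul_exp_two_pi_I hc (-ξ)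
  push_cast at hA
  have hB := summable_norm_mul_exp_two_pi_I hd x
  have hterm : ∀ n : ℤ, g (x - n) * cexp (2 * π * I * (n * ξ)) =
      ∑' p : ℤ × ℤ,
        (c p.1 * cexp (2 * π * I * (p.1 * (-ξ))) * (d p.2 * cexp (2 * π * I * (p.2 * x)))) *
          (g₀ (x - ↑(n + p.1)) * cexp (2 * π * I * (↑(n + p.1) * ξ))) := by
    intro n
    rw [hgdef, ← tsum_mul_right]
    refine tsum_congr fun ⟨k, l⟩ => ?_
    have hshift : cexp (2 * π * I * (k * (-ξ))) * cexp (2 * π * I * ((n + k : ℤ) * ξ)) =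
        cexp (2 * π * I * (n * ξ)) := by
      rw [← Complex.exp_add]; push_cast; ring_nf
    rw [← hshift]
    push_cast
    rw [exp_two_pi_I_int_mul_sub_int, sub_sub]
    ring
  rw [zakTransform, tsum_congr hterm,
    tsum_tsum_mul_add_eq_tsum_mul_tsum (hA.mul_norm hB) (summable_norm_zak_summand ha hg₀ x ξ),
    tsum_mul_tsum_of_summable_norm hA hB, zakTransform]
end

section
/- Let α, β > 0 with αβ < 1, and let r ∈ ℕ satisfy r > αβ/(1 − αβ) (equivalently, r ≥ ⌊1/(1 − αβ)⌋). Then for every x ∈ ℝ the sequences x_j = x + αj (j ∈ ℤ) and y_k = k/β (k ∈ ℤ) satisfy: (a) every open interval (k/β, (k+1)/β) contains at least one point x + αj, and (b) every open interval (k/β, (k+r)/β) contains at least r + 1 points x + αj. -/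
lemma ints_in_Ioo (u v : ℝ) (n : ℕ) (h : (n : ℝ) < v - u) :
    ∃ s : Finset ℤ, n ≤ s.card ∧ ∀ j ∈ s, u < (j : ℝ) ∧ (j : ℝ) < v := by
  refine ⟨(Finset.range n).image (fun (i : ℕ) => ⌊u⌋ + 1 + (i : ℤ)), ?_, ?_⟩
  · rw [Finset.card_image_of_injective _ (fun a b hab => by omega)]
    simp
  · intro j hj
    simp only [Finset.mem_image, Finset.mem_range] at hj
    obtain ⟨i, hi, rfl⟩ := hj
    constructor
    · have := Int.lt_floor_add_one u
      push_cast
      have : (0:ℝ) ≤ (i:ℝ) := by positivity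
      linarith [Int.lt_floor_add_one u]
    · have h1 : (⌊u⌋ : ℝ) ≤ u := Int.floor_le u
      have h2 : (i : ℝ) ≤ (n : ℝ) - 1 := by
        have : (i : ℝ) + 1 ≤ (n : ℝ) := by exact_mod_cast hi
        linarith
      push_cast
      linarith

/-- **Verification of condition `(C_r)` for the lattice sequences.** Let `α, β > 0`
with `αβ < 1` and let `r ∈ ℕ` satisfy `r > αβ/(1 - αβ)`. Then for every `x ∈ ℝ`:
(a) every interval `(k/β, (k+1)/β)` contains at least one point `x + αj`, and
(b) every interval `(k/β, (k+r)/β)` contains at least `r + 1` points `x + αj`. -/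
theorem lattice_condition_Cr
    (α β : ℝ) (hα : 0 < α) (hβ : 0 < β) (hαβ : α * β < 1)
    (r : ℕ) (hr : α * β / (1 - α * β) < (r : ℝ)) :
    ∀ x : ℝ,
      (∀ k : ℤ, ∃ j : ℤ, x + α * j ∈ Set.Ioo ((k : ℝ) / β) (((k : ℝ) + 1) / β)) ∧
      (∀ k : ℤ, ∃ s : Finset ℤ, r + 1 ≤ s.card ∧
        ∀ j ∈ s, x + α * j ∈ Set.Ioo ((k : ℝ) / β) (((k : ℝ) + (r : ℝ)) / β)) := by
  intro x
  have hαβ0 : 0 < α * β := mul_pos hα hβ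
  have h1αβ : 0 < 1 - α * β := by linarith
  have hr' : α * β < (r : ℝ) * (1 - α * β) := (div_lt_iff₀ h1αβ).mp hr
  constructor
  · intro k
    set u := ((k : ℝ) / β - x) / α with hu
    set v := (((k : ℝ) + 1) / β - x) / α with hv
    have hlen : (1 : ℝ) < v - u := by
      have : v - u = 1 / (α * β) := by
        rw [hu, hv]
        field_simp
        ring
      rw [this, lt_div_iff₀ hαβ0]
      linarith
    obtain ⟨s, hcard, hmem⟩ := ints_in_Ioo u v 1 (by exact_mod_cast hlen)
    obtain ⟨j, hj⟩ := Finset.card_pos.mp (lt_of_lt_of_le one_pos hcard)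
    obtain ⟨h1, h2⟩ := hmem j hj
    refine ⟨j, ?_, ?_⟩
    · rw [hu] at h1
      have := (div_lt_iff₀ hα).mp h1
      linarith [mul_comm α (j : ℝ)]
    · rw [hv] at h2
      have := (lt_div_iff₀ hα).mp h2
      linarith [mul_comm α (j : ℝ)]
  · intro k
    set u := ((k : ℝ) / β - x) / α with hu
    set v := (((k : ℝ) + (r : ℝ)) / β - x) / α with hv
    have hlen : ((r : ℝ) + 1) < v - u := by
      have key : (v - u) * (α * β) = (r : ℝ) := by
        rw [hu, hv]
        field_simp
        ring_nf
      nlinarith [key]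
    obtain ⟨s, hcard, hmem⟩ := ints_in_Ioo u v (r + 1) (by push_cast; linarith)
    refine ⟨s, by exact_mod_cast hcard, fun j hj => ?_⟩
    obtain ⟨h1, h2⟩ := hmem j hj
    constructor
    · rw [hu] at h1
      have := (div_lt_iff₀ hα).mp h1
      linarith [mul_comm α (j : ℝ)]
    · rw [hv] at h2
      have := (lt_div_iff₀ hα).mp h2
      linarith [mul_comm α (j : ℝ)]
end
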